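/- Let f be Lebesgue integrable over [c,d], set F(x) = ∫_c^x f(t) dt, and let u : [a,b] → [c,d] be differentiable almost everywhere on [a,b]. Then F ∘ u is absolutely continuous on [a,b] if and only if (f ∘ u) · u' is Lebesgue integrable over [a,b] and for all α, β ∈ [a,b], ∫_{u(α)}^{u(β)} f(x) dx = ∫_α^β f(u(t)) u'(t) dt. -/

import Mathlib

/-!
Both directions rest on the fundamental theorem of calculus for absolutely continuous functions.
Backwards, `F ∘ u` differs on `[a,b]` by a constant from `t ↦ ∫_a^t f(u s) u'(s) ds`, which is
absolutely continuous. Forwards, it suffices that `(F ∘ u)' = (f ∘ u) u'` a.e. on `[a,b]`. This is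
the chain rule wherever `F' (u t) = f (u t)`, which fails only for `u t` in a null set `E`. On
`T = u⁻¹(E)` both `u(T) ⊆ E` and `(F ∘ u)(T) ⊆ F(E)` are null, the latter by Luzin's property (N)
of `F`; and a function mapping a set onto a null set has zero derivative almost everywhere on it,
so both sides vanish a.e. on `T`. Property (N) of `F` holds because `|F y - F x| ≤ |H y - H x|` for
`H x = x + ∫_c^x |f|`, a homeomorphism of `ℝ` pushing `(1 + |f|) dx` forward to Lebesgue measure.
-/

open MeasureTheory Set intervalIntegral
open scoped NNReal

/-- `f` is absolutely continuous on `[a,b]` (standard ε–δ definition). -/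
def AbsolutelyContinuousOn (f : ℝ → ℝ) (a b : ℝ) : Prop :=
  ∀ ε > (0:ℝ), ∃ δ > (0:ℝ), ∀ n : ℕ, ∀ x y : Fin n → ℝ,
    (∀ i, a ≤ x i ∧ x i ≤ y i ∧ y i ≤ b) →
    (∀ i j, i ≠ j → Disjoint (Ioo (x i) (y i)) (Ioo (x j) (y j))) →
    ∑ i, (y i - x i) < δ → ∑ i, |f (y i) - f (x i)| < ε

theorem abs_sub_apply_max_min (g : ℝ → ℝ) (p q : ℝ) :
    |g (max p q) - g (min p q)| = |g p - g q| := by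
  rcases le_total p q with h | h
  · rw [max_eq_right h, min_eq_left h, abs_sub_comm]
  · rw [max_eq_left h, min_eq_right h]

theorem AbsolutelyContinuousOn.absolutelyContinuousOnInterval {f : ℝ → ℝ} {a b : ℝ}
    (hab : a ≤ b) (hf : AbsolutelyContinuousOn f a b) : AbsolutelyContinuousOnInterval f a b := by
  rw [absolutelyContinuousOnInterval_iff]
  intro ε hε
  obtain ⟨δ, hδ, h⟩ := hf ε hε
  refine ⟨δ, hδ, fun ⟨n, I⟩ ⟨hI, hdisj⟩ hlen => ?_⟩
  simp only [uIcc_of_le hab, Finset.mem_range] at hI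
  have key := h n (fun i => min (I i).1 (I i).2) (fun i => max (I i).1 (I i).2)
    (fun i => ⟨le_min (hI i i.2).1.1 (hI i i.2).2.1, min_le_max,
      max_le (hI i i.2).1.2 (hI i i.2).2.2⟩)
    (fun i j hij => (hdisj (by simp) (by simp) (Fin.val_injective.ne hij)).mono
      Ioo_subset_Ioc_self Ioo_subset_Ioc_self)
  simp only [Finset.sum_range, Real.dist_eq] at hlen ⊢
  simp only [abs_sub_apply_max_min] at key
  exact key (by simpa only [max_sub_min_eq_abs'] using hlen)

theorem AbsolutelyContinuousOnInterval.absolutelyContinuousOn {f : ℝ → ℝ} {a b : ℝ}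
    (hf : AbsolutelyContinuousOnInterval f a b) : AbsolutelyContinuousOn f a b := by
  rw [absolutelyContinuousOnInterval_iff] at hf
  intro ε hε
  obtain ⟨δ, hδ, h⟩ := hf ε hε
  refine ⟨δ, hδ, fun n x y hxy hdisj hlen => ?_⟩
  set I : ℕ → ℝ × ℝ := fun i => if hi : i < n then (x ⟨i, hi⟩, y ⟨i, hi⟩) else (0, 0)
  have hI : ∀ i : Fin n, I i = (x i, y i) := fun i => dif_pos i.2
  have hmem : (n, I) ∈ AbsolutelyContinuousOnInterval.disjWithin a b := by
    refine ⟨fun i hi => ?_, fun i hi j hj hij => ?_⟩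
    · obtain ⟨k, rfl⟩ : ∃ k : Fin n, (k : ℕ) = i := ⟨⟨i, Finset.mem_range.1 hi⟩, rfl⟩
      simp only [hI]
      exact ⟨Icc_subset_uIcc ⟨(hxy k).1, (hxy k).2.1.trans (hxy k).2.2⟩,
        Icc_subset_uIcc ⟨(hxy k).1.trans (hxy k).2.1, (hxy k).2.2⟩⟩
    · obtain ⟨k, rfl⟩ : ∃ k : Fin n, (k : ℕ) = i := ⟨⟨i, Finset.mem_range.1 hi⟩, rfl⟩
      obtain ⟨l, rfl⟩ : ∃ l : Fin n, (l : ℕ) = j := ⟨⟨j, Finset.mem_range.1 hj⟩, rfl⟩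
      simp only [Function.onFun, hI, uIoc_of_le (hxy _).2.1]
      exact Ioc_disjoint_Ioc.2 (Ioo_disjoint_Ioo.1 (hdisj k l (Fin.val_injective.ne_iff.1 hij)))
  have key := h (n, I) hmem
  simp only [Finset.sum_range, hI, Real.dist_eq] at key
  simp only [abs_sub_comm (x _), abs_sub_comm (f (x _))] at key
  refine key ?_
  simpa only [abs_of_nonneg (sub_nonneg.2 (hxy _).2.1)] using hlen

theorem absolutelyContinuousOn_of_lt {f : ℝ → ℝ} {a b : ℝ} (hba : b < a) :
    AbsolutelyContinuousOn f a b := by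
  refine fun ε hε => ⟨1, one_pos, fun n x y hxy _ _ => ?_⟩
  cases n with
  | zero => simpa using hε
  | succ n => exact absurd ((hxy 0).1.trans ((hxy 0).2.1.trans (hxy 0).2.2)) hba.not_ge

theorem AbsolutelyContinuousOn.congr_sub {f g : ℝ → ℝ} {a b : ℝ}
    (hf : AbsolutelyContinuousOn f a b)
    (h : ∀ x ∈ Icc a b, ∀ y ∈ Icc a b, g y - g x = f y - f x) :
    AbsolutelyContinuousOn g a b := by
  refine fun ε hε => (hf ε hε).imp fun δ ⟨hδ, hδf⟩ => ⟨hδ, fun n x y hxy hdisj hlen => ?_⟩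
  convert hδf n x y hxy hdisj hlen using 3 with i
  rw [h (x i) ⟨(hxy i).1, (hxy i).2.1.trans (hxy i).2.2⟩ (y i)
    ⟨(hxy i).1.trans (hxy i).2.1, (hxy i).2.2⟩]

theorem ae_deriv_eq_of_ae_hasDerivWithinAt_Icc {g g' : ℝ → ℝ} {a b : ℝ}
    (h : ∀ᵐ t ∂volume.restrict (Icc a b), HasDerivWithinAt g (g' t) (Icc a b) t) :
    deriv g =ᵐ[volume.restrict (Icc a b)] g' := by
  rw [← Measure.restrict_congr_set Ioo_ae_eq_Icc] at h ⊢
  filter_upwards [h, ae_restrict_mem measurableSet_Ioo] with t ht hts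
  exact (ht.hasDerivAt (Icc_mem_nhds hts.1 hts.2)).deriv

theorem AbsolutelyContinuousOn.ae_differentiableWithinAt {G : ℝ → ℝ} {a b : ℝ} (hab : a ≤ b)
    (hG : AbsolutelyContinuousOn G a b) :
    ∀ᵐ t ∂volume.restrict (Icc a b), DifferentiableWithinAt ℝ G (Icc a b) t := by
  rw [ae_restrict_iff' measurableSet_Icc]
  filter_upwards [(hG.absolutelyContinuousOnInterval hab).ae_differentiableAt] with t ht hts
  exact (ht (by rwa [uIcc_of_le hab])).differentiableWithinAt

theorem AbsolutelyContinuousOn.integrableOn_and_integral_eq_sub {G φ : ℝ → ℝ} {a b : ℝ}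
    (hab : a ≤ b) (hG : AbsolutelyContinuousOn G a b)
    (hφ : ∀ᵐ t ∂volume.restrict (Icc a b), HasDerivWithinAt G (φ t) (Icc a b) t) :
    IntegrableOn φ (Icc a b) ∧
      ∀ α ∈ Icc a b, ∀ β ∈ Icc a b, ∫ t in α..β, φ t = G β - G α := by
  have hGI := hG.absolutelyContinuousOnInterval hab
  have hderiv := ae_deriv_eq_of_ae_hasDerivWithinAt_Icc hφ
  refine ⟨((intervalIntegrable_iff_integrableOn_Icc_of_le hab).1
    hGI.intervalIntegrable_deriv).congr_fun_ae hderiv, fun α hα β hβ => ?_⟩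
  rw [← (hGI.mono (uIcc_subset_uIcc (by rwa [uIcc_of_le hab])
    (by rwa [uIcc_of_le hab]))).integral_deriv_eq_sub]
  exact (integral_congr_ae_restrict (ae_restrict_of_ae_restrict_of_subset
    (uIoc_subset_uIcc.trans (uIcc_subset_Icc hα hβ)) hderiv)).symm

theorem absolutelyContinuousOn_of_sub_eq_integral {G φ : ℝ → ℝ} {a b : ℝ} (hab : a ≤ b)
    (hφ : IntegrableOn φ (Icc a b))
    (hG : ∀ x ∈ Icc a b, ∀ y ∈ Icc a b, G y - G x = ∫ t in x..y, φ t) :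
    AbsolutelyContinuousOn G a b := by
  have hφI : ∀ x ∈ Icc a b, IntervalIntegrable φ volume a x := fun x hx =>
    (hφ.mono_set (uIcc_subset_Icc (left_mem_Icc.2 hab) hx)).intervalIntegrable
  refine (((intervalIntegrable_iff_integrableOn_Icc_of_le hab).2 hφ
    ).absolutelyContinuousOnInterval_intervalIntegral left_mem_uIcc
    ).absolutelyContinuousOn.congr_sub fun x hx y hy => ?_
  rw [hG x hx y hy, integral_interval_sub_left (hφI y hy) (hφI x hx)]

theorem volume_image_le_of_abs_sub_le {F H : ℝ → ℝ} {s : Set ℝ} {K : ℝ≥0}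
    (h : ∀ x ∈ s, ∀ y ∈ s, |F y - F x| ≤ K * |H y - H x|) :
    volume (F '' s) ≤ K * volume (H '' s) := by
  set g := Function.invFunOn H s
  have hg : ∀ z ∈ H '' s, g z ∈ s ∧ H (g z) = z := fun z hz =>
    ⟨Function.invFunOn_mem hz, Function.invFunOn_eq hz⟩
  have himage : F '' s = (F ∘ g) '' (H '' s) := by
    rw [← image_comp]
    refine image_congr fun x hx => ?_
    obtain ⟨hgx, hHgx⟩ := hg (H x) (mem_image_of_mem H hx)
    have := h x hx (g (H x)) hgx
    rw [hHgx, sub_self, abs_zero, mul_zero, abs_nonpos_iff, sub_eq_zero] at this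
    exact this.symm
  have hlip : LipschitzOnWith K (F ∘ g) (H '' s) := by
    refine LipschitzOnWith.of_dist_le_mul fun z hz w hw => ?_
    have := h _ (hg w hw).1 _ (hg z hz).1
    rwa [(hg z hz).2, (hg w hw).2, ← Real.dist_eq, ← Real.dist_eq] at this
  rw [himage, ← hausdorffMeasure_real]
  simpa using hlip.hausdorffMeasure_image_le zero_le_one

theorem ae_eq_zero_of_hasDerivWithinAt_of_volume_image_eq_zero {v v' : ℝ → ℝ} {s : Set ℝ}
    (hv : ∀ t ∈ s, HasDerivWithinAt v (v' t) s t) (hvs : volume (v '' s) = 0) :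
    ∀ᵐ t, t ∈ s → v' t = 0 := by
  set A : ℕ → ℕ → Set ℝ := fun n m =>
    {t ∈ s | ∀ y ∈ s, |y - t| < 1 / (m + 1) → |y - t| ≤ (n + 1) * |v y - v t|}
  have hA : ∀ n m, volume (A n m) = 0 := by
    intro n m
    refine measure_null_of_locally_null _ fun t _ =>
      ⟨A n m ∩ Metric.ball t (1 / (m + 1) / 2),
        inter_mem_nhdsWithin _ (Metric.ball_mem_nhds _ (by positivity)), ?_⟩
    set P := A n m ∩ Metric.ball t (1 / (m + 1) / 2)
    have hexp : ∀ x ∈ P, ∀ y ∈ P, |id y - id x| ≤ ((n + 1 : ℝ≥0) : ℝ) * |v y - v x| := by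
      intro x hx y hy
      have hxy : dist y x < 1 / (m + 1) := (dist_triangle_right y x t).trans_lt
        (by linarith [Metric.mem_ball.1 hx.2, Metric.mem_ball.1 hy.2])
      push_cast
      exact hx.1.2 y hy.1.1 (by rwa [Real.dist_eq] at hxy)
    have hvP : volume (v '' P) = 0 :=
      measure_mono_null (image_mono fun x hx => hx.1.1) hvs
    simpa [hvP] using volume_image_le_of_abs_sub_le hexp
  have hcover : ∀ t ∈ s, v' t ≠ 0 → ∃ n m, t ∈ A n m := by
    intro t hts hne
    have hpos : 0 < |v' t| := abs_pos.2 hne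
    obtain ⟨n, hn⟩ := exists_nat_ge (2 / |v' t|)
    have hev := (hasDerivWithinAt_iff_isLittleO.1 (hv t hts)).def (half_pos hpos)
    obtain ⟨r, hr, hball⟩ := Metric.eventually_nhds_iff.1 (eventually_nhdsWithin_iff.1 hev)
    obtain ⟨m, hm⟩ := exists_nat_one_div_lt hr
    refine ⟨n, m, hts, fun y hy hyt => ?_⟩
    have hb := hball (by rw [Real.dist_eq]; exact hyt.trans hm) hy
    rw [Real.norm_eq_abs, Real.norm_eq_abs, smul_eq_mul] at hb
    have hlin : |v' t| * |y - t| ≤ 2 * |v y - v t| := by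
      have := abs_sub_abs_le_abs_sub ((y - t) * v' t) (v y - v t)
      rw [abs_mul, abs_sub_comm ((y - t) * v' t)] at this
      linarith
    calc |y - t| ≤ 2 / |v' t| * |v y - v t| := by
          rw [div_mul_eq_mul_div, le_div_iff₀ hpos]; linarith
      _ ≤ (n + 1) * |v y - v t| := by gcongr; linarith
  have hnull : volume (⋃ n, ⋃ m, A n m) = 0 :=
    measure_iUnion_null fun n => measure_iUnion_null (hA n)
  filter_upwards [measure_eq_zero_iff_ae_notMem.1 hnull] with t ht hts
  by_contra hne
  obtain ⟨n, m, htA⟩ := hcover t hts hne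
  exact ht (mem_iUnion₂.2 ⟨n, m, htA⟩)

theorem OrderIso.volume_image_eq_zero_of_sub_eq_integral {e : ℝ ≃o ℝ} {ρ : ℝ → ℝ}
    (hρ : ∀ x y, IntervalIntegrable ρ volume x y) (hρ0 : 0 ≤ ρ)
    (he : ∀ x y, e y - e x = ∫ t in x..y, ρ t) {N : Set ℝ} (hN : volume N = 0) :
    volume (e '' N) = 0 := by
  set μ := volume.withDensity fun t => ENNReal.ofReal (ρ t)
  have hemb : MeasurableEmbedding e := e.toHomeomorph.measurableEmbedding
  have hmap : volume = μ.map e := by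
    refine Measure.ext_of_Ioc _ _ fun a b hab => ?_
    have hle : e.symm a ≤ e.symm b := e.symm.monotone hab.le
    rw [hemb.map_apply, e.preimage_Ioc, withDensity_apply _ measurableSet_Ioc,
      ← ofReal_integral_eq_lintegral_ofReal (hρ _ _).1 (ae_of_all _ hρ0),
      ← integral_of_le hle, ← he, e.apply_symm_apply, e.apply_symm_apply, Real.volume_Ioc]
  rw [hmap, hemb.map_apply, e.injective.preimage_image]
  exact withDensity_absolutelyContinuous _ _ hN

theorem volume_image_primitive_eq_zero {f : ℝ → ℝ} (hf : Integrable f) (c : ℝ) {N : Set ℝ}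
    (hN : volume N = 0) : volume ((fun x => ∫ t in c..x, f t) '' N) = 0 := by
  set H : ℝ → ℝ := fun x => ∫ t in c..x, (1 + |f t|)
  have hρ : ∀ x y, IntervalIntegrable (fun t => 1 + |f t|) volume x y := fun _ _ =>
    intervalIntegrable_const.add hf.abs.intervalIntegrable
  have hH : ∀ x y, H y - H x = ∫ t in x..y, (1 + |f t|) := fun x y =>
    integral_interval_sub_left (hρ _ _) (hρ _ _)
  have hH' : ∀ x y, H y - H x = (y - x) + ∫ t in x..y, |f t| := fun x y => by
    rw [hH, integral_add intervalIntegrable_const hf.abs.intervalIntegrable,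
      intervalIntegral.integral_const, smul_eq_mul, mul_one]
  have habs : ∀ x y, x ≤ y → 0 ≤ ∫ t in x..y, |f t| := fun x y hxy =>
    intervalIntegral.integral_nonneg hxy fun t _ => abs_nonneg (f t)
  have hmono : StrictMono H := fun x y hxy => by linarith [hH' x y, habs x y hxy.le]
  have hsurj : Function.Surjective H := by
    have hHc : H c = 0 := integral_same
    refine Continuous.surjective (continuous_primitive hρ c) ?_ ?_
    · refine Filter.tendsto_atTop_mono' _ ?_
        (Filter.tendsto_atTop_add_const_right _ (-c) Filter.tendsto_id)
      filter_upwards [Filter.eventually_ge_atTop c] with x hx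
      simp only [id]
      linarith [hH' c x, habs c x hx]
    · refine Filter.tendsto_atBot_mono' _ ?_
        (Filter.tendsto_atBot_add_const_right _ (-c) Filter.tendsto_id)
      filter_upwards [Filter.eventually_le_atBot c] with x hx
      simp only [id]
      linarith [hH' x c, habs x c hx]
  have hHN : volume (H '' N) = 0 :=
    OrderIso.volume_image_eq_zero_of_sub_eq_integral (e := hmono.orderIsoOfSurjective H hsurj) hρ
      (fun t => by positivity) hH hN
  have hle : ∀ x y, x ≤ y → |(∫ t in c..y, f t) - ∫ t in c..x, f t| ≤ |H y - H x| := by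
    intro x y hxy
    have hI := habs x y hxy
    calc |(∫ t in c..y, f t) - ∫ t in c..x, f t| = |∫ t in x..y, f t| := by
          rw [integral_interval_sub_left hf.intervalIntegrable hf.intervalIntegrable]
      _ ≤ ∫ t in x..y, |f t| := abs_integral_le_integral_abs hxy
      _ ≤ |H y - H x| := by rw [hH' x y, abs_of_nonneg (by linarith)]; linarith
  have hcomp : ∀ x ∈ N, ∀ y ∈ N,
      |(∫ t in c..y, f t) - ∫ t in c..x, f t| ≤ (1 : ℝ≥0) * |H y - H x| := by
    intro x _ y _
    rw [NNReal.coe_one, one_mul]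
    rcases le_total x y with hxy | hyx
    · exact hle x y hxy
    · rw [abs_sub_comm, abs_sub_comm (H y)]
      exact hle y x hyx
  simpa [hHN] using volume_image_le_of_abs_sub_le hcomp

theorem ae_hasDerivWithinAt_comp {F F' u u' : ℝ → ℝ} {s S E : Set ℝ} (hs : MeasurableSet s)
    (hus : MapsTo u s S) (hE : volume E = 0) (hFE : volume (F '' E) = 0)
    (hF : ∀ x ∈ S, x ∉ E → HasDerivWithinAt F (F' x) S x)
    (hu : ∀ᵐ t ∂volume.restrict s, HasDerivWithinAt u (u' t) s t)
    (hG : ∀ᵐ t ∂volume.restrict s, DifferentiableWithinAt ℝ (F ∘ u) s t) :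
    ∀ᵐ t ∂volume.restrict s, HasDerivWithinAt (F ∘ u) (F' (u t) * u' t) s t := by
  set T := {t ∈ s | HasDerivWithinAt u (u' t) s t ∧ DifferentiableWithinAt ℝ (F ∘ u) s t ∧ u t ∈ E}
  have hu0 : ∀ᵐ t, t ∈ T → u' t = 0 :=
    ae_eq_zero_of_hasDerivWithinAt_of_volume_image_eq_zero (fun t ht => ht.2.1.mono fun _ h => h.1)
      (measure_mono_null (image_subset_iff.2 fun t ht => ht.2.2.2) hE)
  have hG0 : ∀ᵐ t, t ∈ T → derivWithin (F ∘ u) s t = 0 :=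
    ae_eq_zero_of_hasDerivWithinAt_of_volume_image_eq_zero
      (fun t ht => ht.2.2.1.hasDerivWithinAt.mono fun _ h => h.1)
      (measure_mono_null (by rintro _ ⟨t, ht, rfl⟩; exact mem_image_of_mem F ht.2.2.2) hFE)
  filter_upwards [hu, hG, ae_restrict_mem hs, ae_restrict_of_ae hu0, ae_restrict_of_ae hG0]
    with t hut hGt hts hu0t hG0t
  by_cases htE : u t ∈ E
  · have hT : t ∈ T := ⟨hts, hut, hGt, htE⟩
    rw [hu0t hT, mul_zero, ← hG0t hT]
    exact hGt.hasDerivWithinAt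
  · exact (hF (u t) (hus hts) htE).comp t hut hus

theorem ae_hasDerivWithinAt_primitive_comp {f u u' : ℝ → ℝ} {s : Set ℝ} {c d : ℝ}
    (hs : MeasurableSet s) (hcd : c ≤ d) (hf : IntegrableOn f (Icc c d))
    (hus : MapsTo u s (Icc c d)) (hu : ∀ᵐ t ∂volume.restrict s, HasDerivWithinAt u (u' t) s t)
    (hG : ∀ᵐ t ∂volume.restrict s,
      DifferentiableWithinAt ℝ (fun t => ∫ x in c..u t, f x) s t) :
    ∀ᵐ t ∂volume.restrict s,
      HasDerivWithinAt (fun t => ∫ x in c..u t, f x) (f (u t) * u' t) s t := by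
  set F := fun y => ∫ x in c..y, f x
  set E := {x ∈ Icc c d | ¬HasDerivAt F (f x) x}
  have hE : volume E = 0 := by
    have := ((intervalIntegrable_iff_integrableOn_Icc_of_le hcd).2 hf).ae_hasDerivAt_integral
    rw [uIcc_of_le hcd] at this
    refine measure_mono_null ?_ (ae_iff.1 this)
    exact fun x hx h => hx.2 (h hx.1 c (left_mem_Icc.2 hcd))
  have hFE : volume (F '' E) = 0 := by
    have heq : EqOn F (fun y => ∫ x in c..y, (Icc c d).indicator f x) (Icc c d) := fun y hy =>
      integral_congr fun x hx =>
        (indicator_of_mem (uIcc_subset_Icc (left_mem_Icc.2 hcd) hy hx) f).symm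
    rw [(heq.mono fun x hx => hx.1).image_eq]
    exact volume_image_primitive_eq_zero ((integrable_indicator_iff measurableSet_Icc).2 hf) c hE
  exact ae_hasDerivWithinAt_comp hs hus hE hFE
    (fun x hxS hxE => (not_not.1 fun h => hxE ⟨hxS, h⟩ : HasDerivAt F (f x) x).hasDerivWithinAt)
    hu hG

/-- Change of variable for the Lebesgue integral: let `f` be Lebesgue integrable over
`[c,d]`, `F x = ∫_c^x f`, and `u : [a,b] → [c,d]` differentiable a.e. (with derivative
`u'`). Then `F ∘ u` is absolutely continuous on `[a,b]` iff `(f ∘ u)·u'` is Lebesgue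
integrable over `[a,b]` and `∫_{u α}^{u β} f = ∫_α^β f(u t) u'(t) dt` for all
`α, β ∈ [a,b]`. -/
theorem change_of_variable_lebesgue (a b c d : ℝ) (f u u' : ℝ → ℝ)
    (hf : IntegrableOn f (Icc c d) volume)
    (hmaps : MapsTo u (Icc a b) (Icc c d))
    (hu : ∀ᵐ t ∂(volume.restrict (Icc a b)), HasDerivWithinAt u (u' t) (Icc a b) t)
    (F : ℝ → ℝ) (hF : ∀ x, F x = ∫ t in c..x, f t) :
    AbsolutelyContinuousOn (F ∘ u) a b ↔
      (IntegrableOn (fun t => f (u t) * u' t) (Icc a b) volume ∧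
        ∀ α ∈ Icc a b, ∀ β ∈ Icc a b,
          (∫ x in u α..u β, f x) = ∫ t in α..β, f (u t) * u' t) := by
  rcases lt_or_ge b a with hba | hab
  · simp [Icc_eq_empty_of_lt hba, absolutelyContinuousOn_of_lt hba]
  obtain rfl : F = fun x => ∫ t in c..x, f t := funext hF
  set F : ℝ → ℝ := fun x => ∫ t in c..x, f t
  have hcd : c ≤ d := nonempty_Icc.1 ⟨u a, hmaps (left_mem_Icc.2 hab)⟩
  have hfI : ∀ x ∈ Icc c d, IntervalIntegrable f volume c x := fun x hx =>
    (hf.mono_set (uIcc_subset_Icc (left_mem_Icc.2 hcd) hx)).intervalIntegrable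
  have hsub : ∀ α ∈ Icc a b, ∀ β ∈ Icc a b, (F ∘ u) β - (F ∘ u) α = ∫ x in u α..u β, f x :=
    fun α hα β hβ => integral_interval_sub_left (hfI _ (hmaps hβ)) (hfI _ (hmaps hα))
  constructor
  · intro hG
    obtain ⟨hφ, hφeq⟩ := hG.integrableOn_and_integral_eq_sub hab
      (ae_hasDerivWithinAt_primitive_comp measurableSet_Icc hcd hf hmaps hu
        (hG.ae_differentiableWithinAt hab))
    exact ⟨hφ, fun α hα β hβ => by rw [hφeq α hα β hβ, hsub α hα β hβ]⟩
  · rintro ⟨hφ, hφeq⟩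
    exact absolutelyContinuousOn_of_sub_eq_integral hab hφ fun x hx y hy => by
      rw [hsub x hx y hy, hφeq x hx y hy]
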